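/- arXiv:1608.00926 — 2 statements merged into one kernel-verified Lean document; each statement's English description precedes it below -/
import Mathlib

section
/- Suppose S and S' are depictions of R and q ∈ Z_{S/R}. Then there exists a unique prime ideal q' of S' such that q' ∩ R = q ∩ R; moreover q' ∈ Z_{S'/R} and the height of q' in S' equals the height of q in S. -/
/-! Common framework: depictions of nonnoetherian integral domains (Beil).
`K` plays the role of the fraction field `Frac R`; all rings are `k`-subalgebras of `K`. -/

section Depictions

variable {k K : Type*} [Field k] [Field K] [Algebra k K]

/-- The localization `A_p` of a subalgebra `A ⊆ K` at a prime ideal `p`,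
viewed as a subalgebra of `K`. -/
def locAt (A : Subalgebra k K) (p : Ideal A) (hp : p.IsPrime) : Subalgebra k K where
  carrier := {x : K | ∃ a s : A, s ∉ p ∧ x * (s : K) = (a : K)}
  one_mem' := ⟨1, 1, (Ideal.ne_top_iff_one p).mp hp.ne_top, by simp⟩
  zero_mem' := ⟨0, 1, (Ideal.ne_top_iff_one p).mp hp.ne_top, by simp⟩
  mul_mem' := by
    rintro x y ⟨a, s, hs, hx⟩ ⟨b, t, ht, hy⟩
    refine ⟨a * b, s * t, fun h => ((hp.mem_or_mem h).elim hs ht), ?_⟩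
    have : x * y * ((s : K) * (t : K)) = (x * s) * (y * t) := by ring
    push_cast
    rw [this, hx, hy]
  add_mem' := by
    rintro x y ⟨a, s, hs, hx⟩ ⟨b, t, ht, hy⟩
    refine ⟨a * t + b * s, s * t, fun h => ((hp.mem_or_mem h).elim hs ht), ?_⟩
    have : (x + y) * ((s : K) * (t : K)) = (x * s) * t + (y * t) * s := by ring
    push_cast
    rw [this, hx, hy]
  algebraMap_mem' := fun c =>
    ⟨algebraMap k A c, 1, (Ideal.ne_top_iff_one p).mp hp.ne_top, by simp⟩

lemma mem_locAt {A : Subalgebra k K} {p : Ideal A} {hp : p.IsPrime} {x : K} :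
    x ∈ locAt A p hp ↔ ∃ a s : A, s ∉ p ∧ x * (s : K) = (a : K) := Iff.rfl

/-- `n ∈ U_{S/R}`: `n` is a maximal ideal of `S` with `R_{n ∩ R} = S_n`. -/
def memU (R S : Subalgebra k K) (h : R ≤ S) (n : Ideal S) : Prop :=
  ∃ hn : n.IsMaximal,
    locAt R (n.comap (Subalgebra.inclusion h)) (hn.isPrime.comap _) = locAt S n hn.isPrime

/-- `q ∈ Z_{S/R}`: `q` is a prime of `S` whose zero locus meets `U_{S/R}`,
i.e. some `n ∈ U_{S/R}` contains `q`. -/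
def memZ (R S : Subalgebra k K) (h : R ≤ S) (q : Ideal S) : Prop :=
  q.IsPrime ∧ ∃ n : Ideal S, memU R S h n ∧ q ≤ n

/-- `S` is a depiction of `R`. -/
structure IsDepiction (R S : Subalgebra k K) : Prop where
  le : R ≤ S
  fg : S.FG
  specSurj : ∀ p : Ideal R, p.IsPrime →
    ∃ q : Ideal S, q.IsPrime ∧ q.comap (Subalgebra.inclusion le) = p
  memU_iff : ∀ (n : Ideal S) (hn : n.IsMaximal),
    memU R S le n ↔
      IsNoetherianRing (locAt R (n.comap (Subalgebra.inclusion le)) (hn.isPrime.comap _))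
  nonempty : ∃ n : Ideal S, memU R S le n

/-- The height of an ideal `q`, as the Krull dimension of the set of primes contained in `q`. -/
noncomputable def htOf {A : Type*} [CommRing A] (q : Ideal A) : WithBot ℕ∞ :=
  Order.krullDim {p : PrimeSpectrum A // p.asIdeal ≤ q}

/-- The geometric height of a prime `p` of `R`: the minimum of the heights `ht_S q` over all
depictions `S` of `R` and primes `q` of `S` with `q ∩ R = p`. -/
noncomputable def ght (R : Subalgebra k K) (p : Ideal R) : WithBot ℕ∞ :=
  sInf {h | ∃ (S : Subalgebra k K) (hd : IsDepiction R S) (q : Ideal S),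
    q.IsPrime ∧ q.comap (Subalgebra.inclusion hd.le) = p ∧ h = htOf q}

/-- The geometric dimension of a prime `p` of `R`: `gdim p = dim R - ght p`. -/
noncomputable def gdim (R : Subalgebra k K) (p : Ideal R) : WithBot ℕ∞ :=
  Option.map₂ (· - ·) (ringKrullDim ↥R) (ght R p)

/-- `T := ⋂_{n ∈ U_{S/R}} S_n`, as a subalgebra of `K`. -/
noncomputable def depT (R S : Subalgebra k K) (h : R ≤ S) : Subalgebra k K :=
  sInf {L | ∃ (n : Ideal S) (hn : n.IsMaximal), memU R S h n ∧ L = locAt S n hn.isPrime}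

lemma le_depT (R S : Subalgebra k K) (h : R ≤ S) : S ≤ depT R S h := by
  refine le_sInf ?_
  rintro L ⟨n, hn, -, rfl⟩
  intro x hx
  exact ⟨⟨x, hx⟩, 1, (Ideal.ne_top_iff_one n).mp hn.ne_top, by simp⟩

/-- A depiction `S` of `R` witnesses `noetherian in codimension 1`:
every height 1 prime of `S` lies in `Z_{S/R}`. -/
def Witnessing (R S : Subalgebra k K) (h : R ≤ S) : Prop :=
  ∀ q : Ideal S, q.IsPrime → htOf q = 1 → memZ R S h q

/-- `R` is noetherian in codimension 1. -/
def NoethCodimOne (R : Subalgebra k K) : Prop :=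
  ∃ (S : Subalgebra k K) (hd : IsDepiction R S), Witnessing R S hd.le

/-- A depiction `S` of `R` is saturated if `ght (q ∩ R) = ht_S q` for every prime `q` of `S`
minimal over `(q ∩ R)S`. -/
def IsSaturated (R S : Subalgebra k K) (h : R ≤ S) : Prop :=
  ∀ q : Ideal S,
    q ∈ (Ideal.map (Subalgebra.inclusion h) (q.comap (Subalgebra.inclusion h))).minimalPrimes →
      ght R (q.comap (Subalgebra.inclusion h)) = htOf q

/-- The subalgebra `k + p ⊆ K`, for `p` an ideal of a subalgebra `S ⊆ K`. -/
def kPlus (S : Subalgebra k K) (p : Ideal S) : Subalgebra k K where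
  carrier := {x : K | ∃ (c : k) (f : S), f ∈ p ∧ x = algebraMap k K c + (f : K)}
  one_mem' := ⟨1, 0, p.zero_mem, by simp⟩
  zero_mem' := ⟨0, 0, p.zero_mem, by simp⟩
  mul_mem' := by
    rintro x y ⟨c, f, hf, rfl⟩ ⟨d, g, hg, rfl⟩
    refine ⟨c * d, algebraMap k S c * g + algebraMap k S d * f + f * g,
      add_mem (add_mem (p.mul_mem_left _ hg) (p.mul_mem_left _ hf)) (p.mul_mem_left _ hg),
      ?_⟩
    push_cast
    ring
  add_mem' := by
    rintro x y ⟨c, f, hf, rfl⟩ ⟨d, g, hg, rfl⟩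
    exact ⟨c + d, f + g, add_mem hf hg, by push_cast; ring⟩
  algebraMap_mem' := fun c => ⟨c, 0, p.zero_mem, by simp⟩

lemma kPlus_le (S : Subalgebra k K) (p : Ideal S) : kPlus S p ≤ S := by
  rintro x ⟨c, f, hf, rfl⟩
  exact add_mem (S.algebraMap_mem c) f.2

end Depictions

/-!
Pick `n ∈ U_{S/R}` containing `q` and put `m = n ∩ R`. By Zariski's lemma `S/n` is finite over
`k`, so the domain `R/m ⊆ S/n` is a field and `m` is maximal. As `R_m = S_n` is noetherian, any
maximal ideal `n'` of `S'` over `m` lies in `U_{S'/R}`, so `S, S' ⊆ R_m`. For a subring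
`R ⊆ S ⊆ R_m`, contraction `Q ↦ Q ∩ R` is an order isomorphism from the primes `Q` of `S` with
`Q ∩ R ⊆ m` onto the primes of `R` inside `m`, with inverse `p ↦ pR_m ∩ S`. Applied to `S` and
`S'` this gives existence, uniqueness, `q' ⊆ n'` and the equality of heights.
-/

section LocalizationPrimes

variable {k K : Type*} [Field k] [Field K] [Algebra k K] {R S : Subalgebra k K}

lemma le_locAt (A : Subalgebra k K) (p : Ideal A) (hp : p.IsPrime) : A ≤ locAt A p hp :=
  fun x hx => ⟨⟨x, hx⟩, 1, (Ideal.ne_top_iff_one p).mp hp.ne_top, by simp⟩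

lemma le_locAt_of_memU (h : R ≤ S) {n : Ideal S} (hn : memU R S h n) :
    S ≤ locAt R (n.comap (Subalgebra.inclusion h)) (hn.1.isPrime.comap _) :=
  (le_locAt S n hn.1.isPrime).trans hn.2.ge

variable {m : Ideal R} {hm : m.IsPrime}

/-- The ideal `pR_m ∩ S` of a subalgebra `S ⊆ R_m`. -/
def extLocAt (hSm : S ≤ locAt R m hm) (p : Ideal R) : Ideal S where
  carrier := {x : S | ∃ a s : R, a ∈ p ∧ s ∉ m ∧ (x : K) * (s : K) = (a : K)}
  zero_mem' := ⟨0, 1, p.zero_mem, (Ideal.ne_top_iff_one m).mp hm.ne_top, by simp⟩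
  add_mem' := by
    rintro x y ⟨a, s, ha, hs, hx⟩ ⟨b, t, hb, ht, hy⟩
    refine ⟨a * t + b * s, s * t, add_mem (p.mul_mem_right _ ha) (p.mul_mem_right _ hb),
      fun hst => (hm.mem_or_mem hst).elim hs ht, ?_⟩
    push_cast
    linear_combination (t : K) * hx + (s : K) * hy
  smul_mem' := by
    rintro c x ⟨a, s, ha, hs, hx⟩
    obtain ⟨b, t, ht, hc⟩ := hSm c.2
    refine ⟨b * a, t * s, p.mul_mem_left b ha, fun hts => (hm.mem_or_mem hts).elim ht hs, ?_⟩
    simp only [smul_eq_mul]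
    push_cast
    linear_combination ((x : K) * (s : K)) * hc + (b : K) * hx

lemma extLocAt_mono (hSm : S ≤ locAt R m hm) {p₁ p₂ : Ideal R} (hp : p₁ ≤ p₂) :
    extLocAt hSm p₁ ≤ extLocAt hSm p₂ := by
  rintro x ⟨a, s, ha, hs, hx⟩
  exact ⟨a, s, hp ha, hs, hx⟩

lemma extLocAt_isPrime (hSm : S ≤ locAt R m hm) {p : Ideal R} (hp : p.IsPrime) (hpm : p ≤ m) :
    (extLocAt hSm p).IsPrime := by
  refine ⟨fun htop => ?_, ?_⟩
  · obtain ⟨a, s, ha, hs, hsa⟩ : (1 : S) ∈ extLocAt hSm p := htop ▸ Submodule.mem_top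
    have : s = a := Subtype.ext (by simpa using hsa)
    exact hs (hpm (this ▸ ha))
  · rintro x y ⟨a, s, ha, hs, hxy⟩
    obtain ⟨b, t, ht, hx⟩ := hSm x.2
    obtain ⟨c, u, hu, hy⟩ := hSm y.2
    push_cast at hxy
    -- `a/s = xy = bc/(tu)`, so `bc · s = a · tu ∈ p`
    have hbcs : b * c * s ∈ p := by
      have : a * (t * u) = b * c * s := Subtype.ext (by
        push_cast
        linear_combination (-((t : K) * (u : K))) * hxy + ((y : K) * (u : K) * (s : K)) * hx
          + ((b : K) * (s : K)) * hy)
      exact this ▸ p.mul_mem_right _ ha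
    rcases hp.mem_or_mem ((hp.mem_or_mem hbcs).resolve_right fun hsp => hs (hpm hsp)) with hb | hc
    · exact Or.inl ⟨b, t, hb, ht, hx⟩
    · exact Or.inr ⟨c, u, hc, hu, hy⟩

lemma comap_extLocAt (hSm : S ≤ locAt R m hm) (h : R ≤ S) {p : Ideal R} (hp : p.IsPrime)
    (hpm : p ≤ m) :
    (extLocAt hSm p).comap (Subalgebra.inclusion h) = p := by
  ext r
  refine ⟨fun ⟨a, s, ha, hs, hrs⟩ => ?_,
    fun hr => ⟨r, 1, hr, (Ideal.ne_top_iff_one m).mp hm.ne_top, by simp⟩⟩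
  have : r * s = a := Subtype.ext (by simpa using hrs)
  exact (hp.mem_or_mem (this ▸ ha)).resolve_right fun hsp => hs (hpm hsp)

lemma le_extLocAt_comap (hSm : S ≤ locAt R m hm) (h : R ≤ S) (Q : Ideal S) :
    Q ≤ extLocAt hSm (Q.comap (Subalgebra.inclusion h)) := by
  intro x hx
  obtain ⟨b, t, ht, hxt⟩ := hSm x.2
  refine ⟨b, t, ?_, ht, hxt⟩
  have : Subalgebra.inclusion h b = x * Subalgebra.inclusion h t := Subtype.ext (by simp [← hxt])
  exact Ideal.mem_comap.mpr (this ▸ Q.mul_mem_right _ hx)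

lemma extLocAt_comap (hSm : S ≤ locAt R m hm) (h : R ≤ S) {Q : Ideal S} (hQ : Q.IsPrime)
    (hQm : Q.comap (Subalgebra.inclusion h) ≤ m) :
    extLocAt hSm (Q.comap (Subalgebra.inclusion h)) = Q := by
  refine le_antisymm ?_ (le_extLocAt_comap hSm h Q)
  rintro x ⟨a, s, ha, hs, hxs⟩
  have : x * Subalgebra.inclusion h s = Subalgebra.inclusion h a :=
    Subtype.ext (by simpa using hxs)
  exact (hQ.mem_or_mem (this ▸ ha)).resolve_right fun hsQ => hs (hQm hsQ)

lemma le_of_comap_le (hSm : S ≤ locAt R m hm) (h : R ≤ S) {Q₁ Q₂ : Ideal S}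
    (hQ₂ : Q₂.IsPrime)
    (hle : Q₁.comap (Subalgebra.inclusion h) ≤ Q₂.comap (Subalgebra.inclusion h))
    (hQ₂m : Q₂.comap (Subalgebra.inclusion h) ≤ m) : Q₁ ≤ Q₂ :=
  calc Q₁ ≤ extLocAt hSm (Q₁.comap (Subalgebra.inclusion h)) := le_extLocAt_comap hSm h Q₁
    _ ≤ extLocAt hSm (Q₂.comap (Subalgebra.inclusion h)) := extLocAt_mono hSm hle
    _ = Q₂ := extLocAt_comap hSm h hQ₂ hQ₂m

def primesBelowOrderIso (hSm : S ≤ locAt R m hm) (h : R ≤ S) {Q : Ideal S} (hQ : Q.IsPrime)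
    (hQm : Q.comap (Subalgebra.inclusion h) ≤ m) :
    {P : PrimeSpectrum S // P.asIdeal ≤ Q} ≃o
      {P : PrimeSpectrum R // P.asIdeal ≤ Q.comap (Subalgebra.inclusion h)} where
  toFun P := ⟨⟨P.1.asIdeal.comap (Subalgebra.inclusion h), P.1.2.comap _⟩, Ideal.comap_mono P.2⟩
  invFun p := ⟨⟨extLocAt hSm p.1.asIdeal, extLocAt_isPrime hSm p.1.2 (p.2.trans hQm)⟩,
    (extLocAt_mono hSm p.2).trans (extLocAt_comap hSm h hQ hQm).le⟩
  left_inv P := Subtype.ext <| PrimeSpectrum.ext <|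
    extLocAt_comap hSm h P.1.2 ((Ideal.comap_mono P.2).trans hQm)
  right_inv p := Subtype.ext <| PrimeSpectrum.ext <|
    comap_extLocAt hSm h p.1.2 (p.2.trans hQm)
  map_rel_iff' {_ P₂} := ⟨fun hle => le_of_comap_le hSm h P₂.1.2 hle
    ((Ideal.comap_mono P₂.2).trans hQm), fun hle => Ideal.comap_mono hle⟩

lemma htOf_comap_eq (hSm : S ≤ locAt R m hm) (h : R ≤ S) {Q : Ideal S} (hQ : Q.IsPrime)
    (hQm : Q.comap (Subalgebra.inclusion h) ≤ m) :
    htOf (Q.comap (Subalgebra.inclusion h)) = htOf Q :=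
  (Order.krullDim_eq_of_orderIso (primesBelowOrderIso hSm h hQ hQm)).symm

end LocalizationPrimes

lemma Ideal.IsMaximal.comap_of_finiteType {k A B : Type*} [Field k] [CommRing A] [CommRing B]
    [Algebra k A] [Algebra k B] [Algebra.FiniteType k B] (f : A →ₐ[k] B) {n : Ideal B}
    (hn : n.IsMaximal) : (n.comap f).IsMaximal := by
  let := Ideal.Quotient.field n
  have : Module.Finite k (B ⧸ n) := finite_of_finite_type_of_isJacobsonRing k (B ⧸ n)
  have : Algebra.IsIntegral k (A ⧸ n.comap f) :=
    .of_injective (Ideal.quotientMapₐ n f le_rfl) Ideal.quotientMap_injective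
  have : (n.comap f).IsPrime := hn.isPrime.comap f
  exact Ideal.Quotient.maximal_of_isField _ (isField_of_isIntegral_of_isField' (Field.toIsField k))

namespace IsDepiction

variable {k K : Type*} [Field k] [Field K] [Algebra k K] {R S : Subalgebra k K}

lemma comap_isMaximal (hS : IsDepiction R S) {n : Ideal S} (hn : n.IsMaximal) :
    (n.comap (Subalgebra.inclusion hS.le)).IsMaximal :=
  have : Algebra.FiniteType k S := (Subalgebra.fg_iff_finiteType S).mp hS.fg
  hn.comap_of_finiteType (Subalgebra.inclusion hS.le)

lemma exists_memU_comap_eq (hS : IsDepiction R S) {m : Ideal R} (hm : m.IsMaximal)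
    (hnoeth : IsNoetherianRing (locAt R m hm.isPrime)) :
    ∃ n : Ideal S, memU R S hS.le n ∧ n.comap (Subalgebra.inclusion hS.le) = m := by
  obtain ⟨q, hq, hqm⟩ := hS.specSurj m hm.isPrime
  obtain ⟨n, hn, hqn⟩ := q.exists_le_maximal hq.ne_top
  have hnm : n.comap (Subalgebra.inclusion hS.le) = m :=
    (hm.eq_of_le (hn.isPrime.comap _).ne_top (hqm ▸ Ideal.comap_mono hqn)).symm
  subst hnm
  exact ⟨n, (hS.memU_iff n hn).mpr hnoeth, rfl⟩

end IsDepiction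

theorem unique_prime_over_of_memZ_general (k K : Type*) [Field k] [Field K] [Algebra k K]
    (R : Subalgebra k K)
    (S S' : Subalgebra k K) (hS : IsDepiction R S) (hS' : IsDepiction R S')
    (q : Ideal S) (hq : memZ R S hS.le q) :
    ∃ q' : Ideal S',
      (q'.IsPrime ∧
        q'.comap (Subalgebra.inclusion hS'.le) = q.comap (Subalgebra.inclusion hS.le)) ∧
      (∀ q'' : Ideal S', q''.IsPrime →
        q''.comap (Subalgebra.inclusion hS'.le) = q.comap (Subalgebra.inclusion hS.le) →
        q'' = q') ∧
      memZ R S' hS'.le q' ∧ htOf q' = htOf q := by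
  obtain ⟨hq, n, hnU, hqn⟩ := hq
  have hSm := le_locAt_of_memU hS.le hnU
  obtain ⟨n', hn'U, hn'm⟩ := hS'.exists_memU_comap_eq (hS.comap_isMaximal hnU.1)
    ((hS.memU_iff n hnU.1).mp hnU)
  have hS'm := le_locAt_of_memU hS'.le hn'U
  set p := q.comap (Subalgebra.inclusion hS.le)
  have hp : p.IsPrime := hq.comap _
  have hpm : p ≤ n'.comap (Subalgebra.inclusion hS'.le) := hn'm ▸ Ideal.comap_mono hqn
  have hq' := extLocAt_isPrime hS'm hp hpm
  have hq'p := comap_extLocAt hS'm hS'.le hp hpm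
  refine ⟨extLocAt hS'm p, ⟨hq', hq'p⟩, fun q'' hq'' hq''p => ?_, ⟨hq', n', hn'U, ?_⟩, ?_⟩
  · exact le_antisymm
      (le_of_comap_le hS'm hS'.le hq' (hq''p.trans hq'p.symm).le (hq'p.le.trans hpm))
      (le_of_comap_le hS'm hS'.le hq'' (hq'p.trans hq''p.symm).le (hq''p.le.trans hpm))
  · exact le_of_comap_le hS'm hS'.le hn'U.1.isPrime (hq'p.le.trans hpm) le_rfl
  · rw [← htOf_comap_eq hS'm hS'.le hq' (hq'p.le.trans hpm), hq'p,
      ← htOf_comap_eq hSm hS.le hq (Ideal.comap_mono hqn)]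

/-- If `S`, `S'` are depictions of `R` and `q ∈ Z_{S/R}`, then there is a unique prime `q'`
of `S'` with `q' ∩ R = q ∩ R`; moreover `q' ∈ Z_{S'/R}` and `ht_{S'} q' = ht_S q`. -/
theorem unique_prime_over_of_memZ (k K : Type*) [Field k] [IsAlgClosed k] [Field K] [Algebra k K]
    (R : Subalgebra k K) (hfrac : IsFractionRing ↥R K)
    (S S' : Subalgebra k K) (hS : IsDepiction R S) (hS' : IsDepiction R S')
    (q : Ideal S) (hq : memZ R S hS.le q) :
    ∃ q' : Ideal S',
      (q'.IsPrime ∧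
        q'.comap (Subalgebra.inclusion hS'.le) = q.comap (Subalgebra.inclusion hS.le)) ∧
      (∀ q'' : Ideal S', q''.IsPrime →
        q''.comap (Subalgebra.inclusion hS'.le) = q.comap (Subalgebra.inclusion hS.le) →
        q'' = q') ∧
      memZ R S' hS'.le q' ∧ htOf q' = htOf q :=
  unique_prime_over_of_memZ_general k K R S S' hS hS' q hq
end

section
/- Suppose R is noetherian in codimension 1, with witnessing depiction S, and set T := ⋂_{n ∈ U_{S/R}} S_n ⊆ Frac(R). If t is a prime ideal of T of height 1, then t ∈ Z_{T/R}. -/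
/-!
Pick `0 ≠ a ∈ t ∩ S`. Among the finitely many minimal primes `p` of `aS` lying in some
`n ∈ U_{S/R}`, one satisfies `pS_p ∩ T ⊆ t`. Otherwise the product `X` of one element of each
such `pS_p ∩ T` outside `t` is not in `t`. But writing `X = e / s` in `S_n`, the numerator `e`
lies in every minimal prime of `aS` inside `n`, so `w e ∈ √(aS)` for some `w ∉ n`; with
`(√(aS))^N ⊆ aS` this gives `X^N / a ∈ S_n` for every `n ∈ U_{S/R}`, so `X^N ∈ aT ⊆ t`.
Since `t` has height one, `t = pS_p ∩ T ⊆ nS_n ∩ T`, and `nS_n ∩ T` lies in `U_{T/R}`: its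
residue field is `S/n`, and `T` localized at it is `S_n = R_{n ∩ R}`.
-/

lemma Ideal.exists_notMem_mul_mem_radical {A : Type*} [CommRing A] {I n : Ideal A}
    (hfin : I.minimalPrimes.Finite) (hn : n.IsPrime) {e : A}
    (he : ∀ p ∈ I.minimalPrimes, p ≤ n → e ∈ p) : ∃ w ∉ n, w * e ∈ I.radical := by
  classical
  choose! w hwp hwn using fun p (_ : p ∈ I.minimalPrimes) (h : ¬p ≤ n) =>
    SetLike.not_le_iff_exists.1 h
  let B := hfin.toFinset.filter fun p => ¬p ≤ n
  refine ⟨∏ p ∈ B, w p, fun h => ?_, ?_⟩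
  · obtain ⟨p, hpB, hp⟩ := (Ideal.IsPrime.prod_mem_iff (hp := hn)).1 h
    rw [Finset.mem_filter, Set.Finite.mem_toFinset] at hpB
    exact hwn p hpB.1 hpB.2 hp
  · rw [← Ideal.sInf_minimalPrimes]
    refine Ideal.mem_sInf.2 fun p hp => ?_
    by_cases hpn : p ≤ n
    · exact p.mul_mem_left _ (he p hp hpn)
    · refine p.mul_mem_right _ (p.mem_of_dvd (Finset.dvd_prod_of_mem w ?_) (hwp p hp hpn))
      exact Finset.mem_filter.2 ⟨hfin.mem_toFinset.2 hp, hpn⟩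

lemma htOf_bot {A : Type*} [CommRing A] [IsDomain A] : htOf (⊥ : Ideal A) = 0 := by
  have : Unique {p : PrimeSpectrum A // p.asIdeal ≤ ⊥} :=
    ⟨⟨⟨⟨⊥, Ideal.isPrime_bot⟩, le_rfl⟩⟩,
      fun p => Subtype.ext (PrimeSpectrum.ext (le_bot_iff.1 p.2))⟩
  exact Order.krullDim_eq_zero_of_unique

lemma eq_of_le_of_htOf_eq_one {A : Type*} [CommRing A] [IsDomain A] {p t : Ideal A}
    (ht : t.IsPrime) (h1 : htOf t = 1) (hp : p.IsPrime) (hpt : p ≤ t) (hp0 : p ≠ ⊥) :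
    p = t := by
  by_contra hne
  let x₀ : {q : PrimeSpectrum A // q.asIdeal ≤ t} := ⟨⟨⊥, Ideal.isPrime_bot⟩, bot_le⟩
  let x₁ : {q : PrimeSpectrum A // q.asIdeal ≤ t} := ⟨⟨p, hp⟩, hpt⟩
  let x₂ : {q : PrimeSpectrum A // q.asIdeal ≤ t} := ⟨⟨t, ht⟩, le_rfl⟩
  have h₀₁ : x₀ < x₁ :=
    Subtype.mk_lt_mk.2 (show (⊥ : Ideal A) < p from bot_lt_iff_ne_bot.2 hp0)
  have h₁₂ : x₁ < x₂ := Subtype.mk_lt_mk.2 (show p < t from lt_of_le_of_ne hpt hne)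
  let chain : LTSeries _ :=
    ((RelSeries.singleton _ x₀).snoc x₁ (by exact h₀₁)).snoc x₂ (by exact h₁₂)
  have := Order.LTSeries.length_le_krullDim chain
  rw [show chain.length = 2 from rfl, ← htOf, h1] at this
  norm_num at this

section Overrings

variable {k K : Type*} [Field k] [Field K] [Algebra k K]

lemma locAt_anti {A : Subalgebra k K} {p q : Ideal A} (h : p ≤ q) {hp : p.IsPrime}
    {hq : q.IsPrime} : locAt A q hq ≤ locAt A p hp := by
  rintro x ⟨a, s, hs, hx⟩
  exact ⟨a, s, fun hs' => hs (h hs'), hx⟩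

lemma depT_le_locAt {R S : Subalgebra k K} {h : R ≤ S} {n p : Ideal S} (hU : memU R S h n)
    (hpn : p ≤ n) {hp : p.IsPrime} : depT R S h ≤ locAt S p hp :=
  fun _ hx => locAt_anti hpn (Algebra.mem_sInf.1 hx _ ⟨n, hU.1, hU, rfl⟩)

lemma inclusion_mem_of_mul_eq {S T' : Subalgebra k K} (hST : S ≤ T') {J : Ideal T'} {z : T'}
    (hz : z ∈ J) {a s : S} (hzs : (z : K) * s = a) : Subalgebra.inclusion hST a ∈ J := by
  rw [show Subalgebra.inclusion hST a = z * Subalgebra.inclusion hST s from Subtype.ext hzs.symm]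
  exact J.mul_mem_right _ hz

/-- The ideal `n S_n` of `S_n`, as a subset of `K`. -/
def locIdeal (S : Subalgebra k K) (n : Ideal S) : Set K :=
  {x | ∃ a s : S, s ∉ n ∧ x * s = a ∧ a ∈ n}

lemma mem_of_mem_locIdeal {S : Subalgebra k K} {p : Ideal S} (hp : p.IsPrime) {x : K}
    (hx : x ∈ locIdeal S p) {a s : S} (hxs : x * s = a) : a ∈ p := by
  obtain ⟨b, u, hu, hxu, hb⟩ := hx
  have : a * u = b * s := Subtype.ext (by push_cast; rw [← hxs, ← hxu]; ring)
  exact (hp.mem_or_mem (this ▸ p.mul_mem_right s hb)).resolve_right hu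

lemma mul_mem_locIdeal {S : Subalgebra k K} {p : Ideal S} (hp : p.IsPrime) {x y : K}
    (hx : x ∈ locIdeal S p) (hy : y ∈ locAt S p hp) : x * y ∈ locIdeal S p := by
  obtain ⟨a, s, hs, hxs, ha⟩ := hx
  obtain ⟨b, u, hu, hyu⟩ := hy
  refine ⟨a * b, s * u, hp.mul_notMem hs hu, ?_, p.mul_mem_right b ha⟩
  push_cast
  rw [← hxs, ← hyu]
  ring

/-- The ideal `n S_n ∩ T'` of a ring `T' ⊆ S_n`. -/
def extendPrime (S T' : Subalgebra k K) (n : Ideal S) (hn : n.IsPrime)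
    (hloc : T' ≤ locAt S n hn) : Ideal T' where
  carrier := {z | (z : K) ∈ locIdeal S n}
  zero_mem' := ⟨0, 1, (Ideal.ne_top_iff_one n).1 hn.ne_top, by simp, n.zero_mem⟩
  add_mem' := by
    rintro z z' ⟨a, s, hs, hzs, ha⟩ ⟨a', s', hs', hzs', ha'⟩
    refine ⟨a * s' + a' * s, s * s', hn.mul_notMem hs hs', ?_,
      n.add_mem (n.mul_mem_right _ ha) (n.mul_mem_right _ ha')⟩
    push_cast
    rw [← hzs, ← hzs']
    ring
  smul_mem' c z hz := by
    change ((c * z : T') : K) ∈ locIdeal S n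
    rw [Subalgebra.coe_mul, mul_comm]
    exact mul_mem_locIdeal hn hz (hloc c.2)

section extendPrime

variable {S T' : Subalgebra k K} {n : Ideal S} {hn : n.IsPrime} {hloc : T' ≤ locAt S n hn}

lemma extendPrime_isPrime : (extendPrime S T' n hn hloc).IsPrime := by
  refine ⟨fun htop => hn.ne_top ((Ideal.eq_top_iff_one _).2 ?_), fun {z z'} hzz' => ?_⟩
  · exact mem_of_mem_locIdeal hn ((Ideal.eq_top_iff_one _).1 htop) (s := 1) (by simp)
  · obtain ⟨b, c, hc, hzc⟩ := hloc z.2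
    obtain ⟨b', c', hc', hzc'⟩ := hloc z'.2
    have hbb' : b * b' ∈ n := mem_of_mem_locIdeal hn hzz' (s := c * c') <| by
      push_cast
      rw [← hzc, ← hzc']
      ring
    exact (hn.mem_or_mem hbb').imp (fun hb => ⟨b, c, hc, hzc, hb⟩)
      fun hb' => ⟨b', c', hc', hzc', hb'⟩

lemma comap_extendPrime (hST : S ≤ T') :
    (extendPrime S T' n hn hloc).comap (Subalgebra.inclusion hST) = n := by
  ext a
  exact ⟨fun ha => mem_of_mem_locIdeal hn ha (s := 1) (by simp),
    fun ha => ⟨a, 1, (Ideal.ne_top_iff_one n).1 hn.ne_top, by simp, ha⟩⟩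

lemma le_extendPrime (hST : S ≤ T') {J : Ideal T'}
    (hJ : J.comap (Subalgebra.inclusion hST) ≤ n) :
    J ≤ extendPrime S T' n hn hloc := by
  intro z hz
  obtain ⟨a, s, hs, hzs⟩ := hloc z.2
  exact ⟨a, s, hs, hzs, hJ (inclusion_mem_of_mul_eq hST hz hzs)⟩

lemma locAt_extendPrime (hST : S ≤ T') :
    locAt T' (extendPrime S T' n hn hloc) extendPrime_isPrime = locAt S n hn := by
  refine le_antisymm ?_ fun x ⟨a, s, hs, hxs⟩ => ⟨Subalgebra.inclusion hST a,
    Subalgebra.inclusion hST s, by rwa [← Ideal.mem_comap, comap_extendPrime], hxs⟩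
  rintro x ⟨α, σ, hσ, hx⟩
  obtain ⟨b, c, hc, hαc⟩ := hloc α.2
  obtain ⟨b', c', hc', hσc'⟩ := hloc σ.2
  have hb' : b' ∉ n := fun hb' => hσ ⟨b', c', hc', hσc', hb'⟩
  refine ⟨b * c', b' * c, hn.mul_notMem hb' hc, ?_⟩
  push_cast
  rw [← hσc', ← hαc, ← hx]
  ring

lemma exists_sub_mem_extendPrime (hmax : n.IsMaximal) (hST : S ≤ T') (z : T') :
    ∃ a : S, z - Subalgebra.inclusion hST a ∈ extendPrime S T' n hn hloc := by
  obtain ⟨b, s, hs, hzs⟩ := hloc z.2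
  obtain ⟨y, i, hi, hyi⟩ := hmax.exists_inv hs
  refine ⟨b * y, b * i, s, hs, ?_, n.mul_mem_left b hi⟩
  have hyi' : (y : K) * s + i = 1 := by exact_mod_cast congrArg Subtype.val hyi
  simp only [AddSubgroupClass.coe_sub, Subalgebra.coe_inclusion, Subalgebra.coe_mul]
  linear_combination hzs - (b : K) * hyi'

lemma extendPrime_isMaximal (hmax : n.IsMaximal) (hST : S ≤ T') :
    (extendPrime S T' n hn hloc).IsMaximal := by
  set m := extendPrime S T' n hn hloc
  let φ : S →+* T' ⧸ m := (Ideal.Quotient.mk m).comp (Subalgebra.inclusion hST)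
  have hφ : Function.Surjective φ := by
    intro w
    obtain ⟨z, rfl⟩ := Ideal.Quotient.mk_surjective w
    obtain ⟨a, ha⟩ := exists_sub_mem_extendPrime hmax hST z
    exact ⟨a, (Ideal.Quotient.eq.2 ha).symm⟩
  have hker : RingHom.ker φ = n := by
    rw [← RingHom.comap_ker, Ideal.mk_ker]
    exact comap_extendPrime hST
  rw [Ideal.Quotient.maximal_ideal_iff_isField_quotient] at hmax ⊢
  exact MulEquiv.isField hmax
    ((RingHom.quotientKerEquivOfSurjective hφ).symm.trans (Ideal.quotEquivOfEq hker)).toMulEquiv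

lemma memU_extendPrime {R : Subalgebra k K} (hRS : R ≤ S) (hST : S ≤ T') (hU : memU R S hRS n) :
    memU R T' (hRS.trans hST) (extendPrime S T' n hn hloc) := by
  refine ⟨extendPrime_isMaximal hU.1 hST, ?_⟩
  have hcomap : (extendPrime S T' n hn hloc).comap (Subalgebra.inclusion (hRS.trans hST)) =
      n.comap (Subalgebra.inclusion hRS) :=
    Ideal.ext fun r => Ideal.ext_iff.1 (comap_extendPrime hST) (Subalgebra.inclusion hRS r)
  rw [locAt_extendPrime hST, ← hU.2]
  congr 1

end extendPrime

lemma exists_ne_zero_inclusion_mem {S T' : Subalgebra k K} (hST : S ≤ T') {n : Ideal S}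
    {hn : n.IsPrime} (hloc : T' ≤ locAt S n hn) {J : Ideal T'} (hJ : J ≠ ⊥) :
    ∃ a : S, a ≠ 0 ∧ Subalgebra.inclusion hST a ∈ J := by
  obtain ⟨z, hzJ, hz⟩ := Submodule.exists_mem_ne_zero_of_ne_bot hJ
  obtain ⟨a, s, hs, hzs⟩ := hloc z.2
  have hs0 : (s : K) ≠ 0 := fun h0 => hs ((Subtype.ext h0 : s = 0) ▸ n.zero_mem)
  refine ⟨a, fun ha => hz (Subtype.ext ?_), inclusion_mem_of_mul_eq hST hzJ hzs⟩
  simpa [ha, hs0] using hzs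

lemma pow_div_mem_locAt {S : Subalgebra k K} {a : S} (ha : (a : K) ≠ 0)
    (hfin : (Ideal.span {a}).minimalPrimes.Finite) {N : ℕ}
    (hN : (Ideal.span {a}).radical ^ N ≤ Ideal.span {a}) {n : Ideal S} (hn : n.IsPrime) {x : K}
    (hx : x ∈ locAt S n hn)
    (hxp : ∀ p ∈ (Ideal.span {a}).minimalPrimes, p ≤ n → x ∈ locIdeal S p) :
    x ^ N / a ∈ locAt S n hn := by
  obtain ⟨e, s, hs, hxs⟩ := hx
  obtain ⟨w, hwn, hwe⟩ := Ideal.exists_notMem_mul_mem_radical hfin hn fun p hp hpn =>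
    mem_of_mem_locIdeal hp.1.1 (hxp p hp hpn) hxs
  obtain ⟨g, hg⟩ := Ideal.mem_span_singleton'.1 (hN (Ideal.pow_mem_pow hwe N))
  refine ⟨g, (s * w) ^ N, fun h => hn.mul_notMem hs hwn (hn.mem_of_pow_mem N h), ?_⟩
  have hgK : (g : K) * a = ((w : K) * e) ^ N := by exact_mod_cast congrArg Subtype.val hg
  rw [div_mul_eq_mul_div, div_eq_iff ha, hgK]
  push_cast
  rw [← hxs]
  ring

lemma pow_div_mem_depT {R S : Subalgebra k K} {h : R ≤ S} [IsNoetherianRing S] {a : S}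
    (ha : (a : K) ≠ 0) {x : K} (hx : x ∈ depT R S h)
    (hxp : ∀ p ∈ (Ideal.span {a}).minimalPrimes, (∃ n, memU R S h n ∧ p ≤ n) →
      x ∈ locIdeal S p) :
    ∃ N : ℕ, x ^ N / a ∈ depT R S h := by
  obtain ⟨N, hN⟩ :=
    Ideal.exists_radical_pow_le_of_fg (Ideal.span {a}) (IsNoetherian.noetherian _)
  refine ⟨N, Algebra.mem_sInf.2 ?_⟩
  rintro _ ⟨n, hmax, hU, rfl⟩
  exact pow_div_mem_locAt ha (Ideal.finite_minimalPrimes_of_isNoetherianRing _ _) hN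
    hmax.isPrime (depT_le_locAt hU le_rfl hx) fun p hp hpn => hxp p hp ⟨n, hU, hpn⟩

lemma exists_minimalPrimes_locIdeal_subset {R S : Subalgebra k K} {h : R ≤ S}
    [IsNoetherianRing S] {t : Ideal (depT R S h)} (ht : t.IsPrime) {a : S} (ha : a ≠ 0)
    (hat : Subalgebra.inclusion (le_depT R S h) a ∈ t) :
    ∃ p ∈ (Ideal.span {a}).minimalPrimes, (∃ n, memU R S h n ∧ p ≤ n) ∧
      ∀ z : depT R S h, (z : K) ∈ locIdeal S p → z ∈ t := by
  classical
  by_contra! hC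
  let G := {p ∈ (Ideal.span {a}).minimalPrimes | ∃ n, memU R S h n ∧ p ≤ n}
  have hG : G.Finite := (Ideal.finite_minimalPrimes_of_isNoetherianRing _ _).subset fun _ hp => hp.1
  choose! x hxp hxt using fun p (hp : p ∈ G) => hC p hp.1 hp.2
  let X := ∏ p ∈ hG.toFinset, x p
  have hXt : X ∉ t := fun hX => by
    obtain ⟨p, hp, hpt⟩ := (Ideal.IsPrime.prod_mem_iff (hp := ht)).1 hX
    exact hxt p (hG.mem_toFinset.1 hp) hpt
  have hXp : ∀ p ∈ G, (X : K) ∈ locIdeal S p := by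
    intro p hp
    obtain ⟨n, hU, hpn⟩ := hp.2
    change ((∏ p ∈ hG.toFinset, x p : depT R S h) : K) ∈ locIdeal S p
    rw [← Finset.mul_prod_erase _ _ (hG.mem_toFinset.2 hp), Subalgebra.coe_mul]
    exact mul_mem_locIdeal hp.1.1.1 (hxp p hp) (depT_le_locAt hU hpn (Subtype.prop _))
  have ha' : (a : K) ≠ 0 := fun h0 => ha (Subtype.ext h0)
  obtain ⟨N, hN⟩ := pow_div_mem_depT ha' X.2 fun p hp hpn => hXp p ⟨hp, hpn⟩
  refine hXt (ht.mem_of_pow_mem N ?_)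
  have hXN : X ^ N = Subalgebra.inclusion (le_depT R S h) a * ⟨_, hN⟩ := by
    ext
    simp [mul_div_cancel₀ _ ha']
  rw [hXN]
  exact t.mul_mem_right _ hat

end Overrings

theorem height_one_prime_of_depT_memZ_general (k K : Type*) [Field k] [Field K] [Algebra k K]
    (R : Subalgebra k K)
    (S : Subalgebra k K) (hS : IsDepiction R S) :
    ∀ t : Ideal (depT R S hS.le), t.IsPrime → htOf t = 1 →
      memZ R (depT R S hS.le) (hS.le.trans (le_depT R S hS.le)) t := by
  intro t ht h1
  have : Algebra.FiniteType k S := (Subalgebra.fg_iff_finiteType S).1 hS.fg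
  have : IsNoetherianRing S := Algebra.FiniteType.isNoetherianRing k S
  have hST := le_depT R S hS.le
  obtain ⟨n₀, hn₀⟩ := hS.nonempty
  have ht0 : t ≠ ⊥ := by rintro rfl; simp [htOf_bot] at h1
  obtain ⟨a, ha, hat⟩ :=
    exists_ne_zero_inclusion_mem hST (depT_le_locAt hn₀ le_rfl (hp := hn₀.1.isPrime)) ht0
  obtain ⟨p, hp, ⟨n, hU, hpn⟩, hpt⟩ := exists_minimalPrimes_locIdeal_subset ht ha hat
  have hap : Subalgebra.inclusion hST a ∈ extendPrime S _ p hp.1.1 (depT_le_locAt hU hpn) := by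
    rw [← Ideal.mem_comap, comap_extendPrime]
    exact hp.1.2 (Ideal.mem_span_singleton_self a)
  have ha0 : Subalgebra.inclusion hST a ≠ 0 :=
    (map_ne_zero_iff _ (Subalgebra.inclusion_injective hST)).2 ha
  have hpT := eq_of_le_of_htOf_eq_one ht h1 extendPrime_isPrime hpt
    ((Submodule.ne_bot_iff _).2 ⟨_, hap, ha0⟩)
  have hTn := depT_le_locAt hU le_rfl (hp := hU.1.isPrime)
  refine ⟨ht, _, memU_extendPrime hS.le hST hU (hloc := hTn), le_extendPrime hST ?_⟩
  rw [← hpT, comap_extendPrime]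
  exact hpn

/-- If `R` is noetherian in codimension 1 with witnessing depiction `S` and
`T := ⋂_{n ∈ U_{S/R}} S_n`, then every height 1 prime of `T` lies in `Z_{T/R}`. -/
theorem height_one_prime_of_depT_memZ (k K : Type*) [Field k] [IsAlgClosed k] [Field K] [Algebra k K]
    (R : Subalgebra k K) (hfrac : IsFractionRing ↥R K)
    (S : Subalgebra k K) (hS : IsDepiction R S) (hw : Witnessing R S hS.le) :
    ∀ t : Ideal (depT R S hS.le), t.IsPrime → htOf t = 1 →
      memZ R (depT R S hS.le) (hS.le.trans (le_depT R S hS.le)) t :=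
  height_one_prime_of_depT_memZ_general k K R S hS
end
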